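/- In any Bayesian valid utility game whose prior ρ is independent (a product distribution), every communication equilibrium π satisfies E_{θ∼ρ}[E_{a∼π(θ)}[SW(a)]] ≥ (1/2) · OPT; that is, the price of anarchy for communication equilibria is at least 1/2 in the independent case. -/
import Mathlib


open Finset

/-- A set function is monotone if it is nondecreasing with respect to inclusion. -/
def MonotoneFn {α : Type*} (f : Finset α → ℝ) : Prop :=
  ∀ ⦃X Y : Finset α⦄, X ⊆ Y → f X ≤ f Y

/-- A set function is submodular if marginal gains diminish as the set grows. -/
def SubmodularFn {α : Type*} [DecidableEq α] (f : Finset α → ℝ) : Prop :=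
  ∀ ⦃X Y : Finset α⦄, X ⊆ Y → ∀ u, u ∉ Y → f (insert u Y) - f Y ≤ f (insert u X) - f X

/-- `OPT = E_{θ∼ρ}[max_{a ∈ A^θ} SW a]`, where `SW a = f {a_1, …, a_n}`. -/
noncomputable def gOPT {n : ℕ} {Θ : Fin n → Type*} [∀ i, Fintype (Θ i)] [∀ i, DecidableEq (Θ i)]
    {E : Type*} [Fintype E] [DecidableEq E]
    (Act : ∀ i, Θ i → Finset E) (hAne : ∀ i t, (Act i t).Nonempty)
    (ρ : (∀ i, Θ i) → ℝ) (f : Finset E → ℝ) : ℝ :=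
  ∑ θ : ∀ i, Θ i, ρ θ *
    (Fintype.piFinset fun i => Act i (θ i)).sup'
      (Fintype.piFinset_nonempty.mpr fun i => hAne i (θ i))
      (fun a => f (Finset.univ.image a))

/-- `STR = max_{s ∈ S} E_{θ∼ρ}[SW (s θ)]`, the maximum over strategy profiles. -/
noncomputable def gSTR {n : ℕ} {Θ : Fin n → Type*} [∀ i, Fintype (Θ i)] [∀ i, DecidableEq (Θ i)]
    {E : Type*} [Fintype E] [DecidableEq E]
    (Act : ∀ i, Θ i → Finset E) (hAne : ∀ i t, (Act i t).Nonempty)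
    (ρ : (∀ i, Θ i) → ℝ) (f : Finset E → ℝ) : ℝ :=
  (Fintype.piFinset fun i => Fintype.piFinset fun t : Θ i => Act i t).sup'
    (Fintype.piFinset_nonempty.mpr fun i => Fintype.piFinset_nonempty.mpr fun t => hAne i t)
    (fun s => ∑ θ : ∀ i, Θ i, ρ θ * f (Finset.univ.image fun i => s i (θ i)))



lemma sum_swap3 {α β γ : Type*} [Fintype α] [Fintype β] [Fintype γ] (g : α → β → γ → ℝ) :
    ∑ x : α, ∑ y : β, ∑ z : γ, g x y z = ∑ y, ∑ z, ∑ x, g x y z := by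
  rw [Finset.sum_comm]
  exact Finset.sum_congr rfl fun y _ => Finset.sum_comm

lemma sum_swap4 {α β γ δ : Type*} [Fintype α] [Fintype β] [Fintype γ] [Fintype δ]
    (g : α → β → γ → δ → ℝ) :
    ∑ w : α, ∑ x : β, ∑ y : γ, ∑ z : δ, g w x y z = ∑ z, ∑ w, ∑ x, ∑ y, g w x y z := by
  calc ∑ w : α, ∑ x : β, ∑ y : γ, ∑ z : δ, g w x y z
      = ∑ w : α, ∑ x : β, ∑ z : δ, ∑ y : γ, g w x y z :=
        Finset.sum_congr rfl fun w _ => Finset.sum_congr rfl fun x _ => Finset.sum_comm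
    _ = ∑ w : α, ∑ z : δ, ∑ x : β, ∑ y : γ, g w x y z :=
        Finset.sum_congr rfl fun w _ => Finset.sum_comm
    _ = ∑ z, ∑ w, ∑ x, ∑ y, g w x y z := Finset.sum_comm

lemma sum_update_swap {n : ℕ} {Θ : Fin n → Type*} [∀ i, Fintype (Θ i)] [∀ i, DecidableEq (Θ i)]
    (i : Fin n) (H : (∀ j, Θ j) → Θ i → ℝ) :
    ∑ θ : ∀ j, Θ j, ∑ t : Θ i, H (Function.update θ i t) (θ i)
      = ∑ θ : ∀ j, Θ j, ∑ t : Θ i, H θ t := by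
  have hinv : Function.Involutive
      (fun p : (∀ j, Θ j) × Θ i => (Function.update p.1 i p.2, p.1 i)) := by
    intro p
    simp [Function.update_idem]
  calc ∑ θ : ∀ j, Θ j, ∑ t : Θ i, H (Function.update θ i t) (θ i)
      = ∑ p : (∀ j, Θ j) × Θ i, H (Function.update p.1 i p.2) (p.1 i) :=
        (Fintype.sum_prod_type (f := fun p => H (Function.update p.1 i p.2) (p.1 i))).symm
    _ = ∑ p : (∀ j, Θ j) × Θ i, H p.1 p.2 :=
        Fintype.sum_bijective _ hinv.bijective _ _ (fun p => rfl)
    _ = ∑ θ : ∀ j, Θ j, ∑ t : Θ i, H θ t :=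
        Fintype.sum_prod_type (f := fun p => H p.1 p.2)

lemma smooth_aux {n : ℕ} {E : Type*} [Fintype E] [DecidableEq E]
    (f : Finset E → ℝ) (hmono : MonotoneFn f) (hsub : SubmodularFn f)
    (v : Fin n → (Fin n → E) → ℝ) (hv0 : ∀ i a, 0 ≤ v i a)
    (P : (Fin n → E) → Prop)
    (hP : ∀ (a b : Fin n → E) (i : Fin n), P a → P b → P (Function.update a i (b i)))
    (hmarg : ∀ a : Fin n → E, P a → ∀ i,
      f (Finset.univ.image a) - f ((Finset.univ.image a).erase (a i)) ≤ v i a)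
    (a b : Fin n → E) (ha : P a) (hb : P b) :
    f (Finset.univ.image b) - f (Finset.univ.image a)
      ≤ ∑ i, v i (Function.update a i (b i)) := by
  classical
  have main : ∀ T : Finset (Fin n),
      f (Finset.univ.image a ∪ T.image b) - f (Finset.univ.image a)
        ≤ ∑ i ∈ T, v i (Function.update a i (b i)) := by
    intro T
    induction T using Finset.induction_on with
    | empty => simp
    | @insert j T hj ih =>
      rw [Finset.sum_insert hj, Finset.image_insert, Finset.union_insert]
      by_cases hbW : b j ∈ Finset.univ.image a ∪ T.image b
      · rw [Finset.insert_eq_self.mpr hbW]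
        have h0 := hv0 j (Function.update a j (b j))
        linarith
      · have hPa' : P (Function.update a j (b j)) := hP a b j ha hb
        have hm := hmarg (Function.update a j (b j)) hPa' j
        have haj : Function.update a j (b j) j = b j := Function.update_self j (b j) a
        have hbmem : b j ∈ Finset.univ.image (Function.update a j (b j)) :=
          Finset.mem_image.mpr ⟨j, Finset.mem_univ j, haj⟩
        have hXsub : (Finset.univ.image (Function.update a j (b j))).erase (b j)
            ⊆ Finset.univ.image a ∪ T.image b := by
          intro x hx
          obtain ⟨hxne, hx⟩ := Finset.mem_erase.mp hx
          obtain ⟨m, -, rfl⟩ := Finset.mem_image.mp hx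
          have hmj : m ≠ j := by rintro rfl; exact hxne haj
          rw [Function.update_of_ne hmj]
          exact Finset.mem_union_left _ (Finset.mem_image_of_mem a (Finset.mem_univ m))
        have hsb := hsub hXsub (b j) hbW
        rw [Finset.insert_erase hbmem] at hsb
        rw [haj] at hm
        linarith
  have h2 : f (Finset.univ.image b) ≤ f (Finset.univ.image a ∪ Finset.univ.image b) :=
    hmono Finset.subset_union_right
  have h3 := main Finset.univ
  linarith


/-- In any Bayesian valid utility game whose prior is independent
(a product distribution), every communication equilibrium `π` satisfies
`E_{θ∼ρ}[E_{a∼π θ}[SW a]] ≥ (1/2) · OPT`: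
the price of anarchy for communication equilibria is at least `1/2` in the independent
case.  (The incentive constraints are stated in their `ρᵢ(θᵢ)`-weighted form, which is
equivalent to the conditional form whenever `ρᵢ(θᵢ) > 0`.) -/
theorem communication_equilibrium_poa_independent
    {n : ℕ} {Θ : Fin n → Type*} [∀ i, Fintype (Θ i)] [∀ i, DecidableEq (Θ i)]
    [∀ i, Nonempty (Θ i)]
    {E : Type*} [Fintype E] [DecidableEq E]
    (Act : ∀ i, Θ i → Finset E) (hAne : ∀ i t, (Act i t).Nonempty)
    (hdisj : ∀ p q : Σ i : Fin n, Θ i, p ≠ q → Disjoint (Act p.1 p.2) (Act q.1 q.2))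
    (ρ : (∀ i, Θ i) → ℝ) (hρ0 : ∀ θ, 0 ≤ ρ θ) (hρ1 : ∑ θ, ρ θ = 1)
    (ρi : ∀ i, Θ i → ℝ) (hρi0 : ∀ i t, 0 ≤ ρi i t) (hρi1 : ∀ i, ∑ t, ρi i t = 1)
    (hprod : ∀ θ, ρ θ = ∏ i, ρi i (θ i))
    (f : Finset E → ℝ) (hf0 : ∀ X, 0 ≤ f X)
    (hmono : MonotoneFn f) (hsub : SubmodularFn f)
    -- valid utility game: utilities, total utility and marginal contribution conditions
    (v : Fin n → (Fin n → E) → ℝ) (hv0 : ∀ i a, 0 ≤ v i a)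
    (htotal : ∀ a : Fin n → E, (∀ i, ∃ t, a i ∈ Act i t) →
      ∑ i, v i a ≤ f (Finset.univ.image a))
    (hmarg : ∀ a : Fin n → E, (∀ i, ∃ t, a i ∈ Act i t) → ∀ i,
      f (Finset.univ.image a) - f ((Finset.univ.image a).erase (a i)) ≤ v i a)
    -- π is a type-dependent distribution supported on A^θ
    (π : (∀ i, Θ i) → (Fin n → E) → ℝ)
    (hπ0 : ∀ θ a, 0 ≤ π θ a) (hπ1 : ∀ θ, ∑ a, π θ a = 1)
    (hπsupp : ∀ θ a, π θ a ≠ 0 → ∀ i, a i ∈ Act i (θ i))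
    -- π is a communication equilibrium
    (hCom : ∀ i : Fin n, ∀ tᵢ tᵢ' : Θ i, ∀ φ : E → E,
      (∀ b ∈ Act i tᵢ', φ b ∈ Act i tᵢ) →
      ∑ θ, (if θ i = tᵢ then ρ θ else 0) *
          ∑ a, π (Function.update θ i tᵢ') a * v i (Function.update a i (φ (a i)))
        ≤ ∑ θ, (if θ i = tᵢ then ρ θ else 0) * ∑ a, π θ a * v i a) :
    (1 / 2) * gOPT Act hAne ρ f
      ≤ ∑ θ, ρ θ * ∑ a, π θ a * f (Finset.univ.image a) := by
  classical
  -- choose an optimal action profile for each type profile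
  have hchoice : ∀ θ : ∀ i, Θ i, ∃ b ∈ Fintype.piFinset fun i => Act i (θ i),
      (Fintype.piFinset fun i => Act i (θ i)).sup'
        (Fintype.piFinset_nonempty.mpr fun i => hAne i (θ i))
        (fun a => f (Finset.univ.image a)) = f (Finset.univ.image b) := fun θ =>
    Finset.exists_mem_eq_sup' _ _
  choose astar hastar hfstar using hchoice
  have hmem : ∀ (θ : ∀ i, Θ i) (i : Fin n), astar θ i ∈ Act i (θ i) := fun θ i =>
    Fintype.mem_piFinset.mp (hastar θ) i
  have hOPTeq : gOPT Act hAne ρ f = ∑ τ, ρ τ * f (Finset.univ.image (astar τ)) :=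
    Finset.sum_congr rfl fun τ _ => by rw [hfstar τ]
  -- product measure facts
  have lemD : ∀ (i : Fin n) (θ : ∀ j, Θ j) (t : Θ i),
      ρ (Function.update θ i t) * ρi i (θ i) = ρ θ * ρi i t := by
    intro i θ t
    rw [hprod, hprod]
    rw [← Finset.prod_erase_mul Finset.univ _ (Finset.mem_univ i),
        ← Finset.prod_erase_mul Finset.univ (fun j => ρi j (θ j)) (Finset.mem_univ i)]
    have he : ∀ j ∈ Finset.univ.erase i,
        ρi j (Function.update θ i t j) = ρi j (θ j) := fun j hj => by
      rw [Function.update_of_ne (Finset.ne_of_mem_erase hj)]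
    rw [Finset.prod_congr rfl he, Function.update_self]
    ring
  have lemC : ∀ (i : Fin n) (F : (∀ j, Θ j) → ℝ),
      ∑ τ, ρ τ * F τ = ∑ τ', ∑ t, ρ τ' * ρi i t * F (Function.update τ' i t) := by
    intro i F
    have h := sum_update_swap i (fun σ s => ρ σ * ρi i s * F σ)
    have h1 : ∑ θ : ∀ j, Θ j, ∑ t : Θ i,
        ρ (Function.update θ i t) * ρi i (θ i) * F (Function.update θ i t)
        = ∑ θ : ∀ j, Θ j, ∑ t : Θ i, ρ θ * ρi i t * F (Function.update θ i t) :=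
      Finset.sum_congr rfl fun θ _ => Finset.sum_congr rfl fun t _ => by rw [lemD i θ t]
    have h2 : ∑ θ : ∀ j, Θ j, ∑ t : Θ i, ρ θ * ρi i t * F θ = ∑ θ, ρ θ * F θ := by
      refine Finset.sum_congr rfl fun θ _ => ?_
      calc ∑ t : Θ i, ρ θ * ρi i t * F θ = ∑ t : Θ i, (ρ θ * F θ) * ρi i t :=
            Finset.sum_congr rfl fun t _ => by ring
        _ = (ρ θ * F θ) * ∑ t : Θ i, ρi i t := by rw [Finset.mul_sum]
        _ = ρ θ * F θ := by rw [hρi1, mul_one]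
    rw [← h2, ← h, h1]
  -- the starred single-deviation inequality
  have star : ∀ (i : Fin n) (t : Θ i) (b : E), b ∈ Act i t →
      ρi i t * ∑ σ, ρ σ * ∑ a, π σ a * v i (Function.update a i b)
        ≤ ∑ θ, (if θ i = t then ρ θ else 0) * ∑ a, π θ a * v i a := by
    intro i t b hb
    have hdev : ∀ t' : Θ i,
        ∑ θ, (if θ i = t then ρ θ else 0) *
            ∑ a, π (Function.update θ i t') a * v i (Function.update a i b)
          ≤ ∑ θ, (if θ i = t then ρ θ else 0) * ∑ a, π θ a * v i a := fun t' =>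
      hCom i t t' (fun _ => b) (fun _ _ => hb)
    have h2 : ∑ t' : Θ i, ρi i t' * (∑ θ, (if θ i = t then ρ θ else 0) *
          ∑ a, π (Function.update θ i t') a * v i (Function.update a i b))
        ≤ ∑ t' : Θ i, ρi i t' * ∑ θ, (if θ i = t then ρ θ else 0) * ∑ a, π θ a * v i a := by
      refine Finset.sum_le_sum fun t' _ => ?_
      exact mul_le_mul_of_nonneg_left (hdev t') (hρi0 i t')
    have hR : ∑ t' : Θ i, ρi i t' * ∑ θ, (if θ i = t then ρ θ else 0) * ∑ a, π θ a * v i a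
        = ∑ θ, (if θ i = t then ρ θ else 0) * ∑ a, π θ a * v i a := by
      rw [← Finset.sum_mul, hρi1, one_mul]
    have hL : ∑ t' : Θ i, ρi i t' * (∑ θ, (if θ i = t then ρ θ else 0) *
          ∑ a, π (Function.update θ i t') a * v i (Function.update a i b))
        = ρi i t * ∑ σ, ρ σ * ∑ a, π σ a * v i (Function.update a i b) := by
      have hswap := sum_update_swap i (fun σ s =>
        if s = t then ρ σ * ρi i s * ∑ a, π σ a * v i (Function.update a i b) else 0)
      calc ∑ t' : Θ i, ρi i t' * (∑ θ, (if θ i = t then ρ θ else 0) *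
              ∑ a, π (Function.update θ i t') a * v i (Function.update a i b))
          = ∑ t' : Θ i, ∑ θ, ρi i t' * ((if θ i = t then ρ θ else 0) *
              ∑ a, π (Function.update θ i t') a * v i (Function.update a i b)) := by
            refine Finset.sum_congr rfl fun t' _ => ?_
            rw [Finset.mul_sum]
        _ = ∑ θ, ∑ t' : Θ i, ρi i t' * ((if θ i = t then ρ θ else 0) *
              ∑ a, π (Function.update θ i t') a * v i (Function.update a i b)) :=
            Finset.sum_comm
        _ = ∑ θ, ∑ t' : Θ i,
              (if θ i = t then
                ρ (Function.update θ i t') * ρi i (θ i) *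
                  ∑ a, π (Function.update θ i t') a * v i (Function.update a i b)
               else 0) := by
            refine Finset.sum_congr rfl fun θ _ => Finset.sum_congr rfl fun t' _ => ?_
            split_ifs with h
            · rw [lemD i θ t']; ring
            · ring
        _ = ∑ θ, ∑ s : Θ i,
              (if s = t then ρ θ * ρi i s * ∑ a, π θ a * v i (Function.update a i b) else 0) :=
            hswap
        _ = ∑ θ, ρ θ * ρi i t * ∑ a, π θ a * v i (Function.update a i b) := by
            refine Finset.sum_congr rfl fun θ _ => ?_
            rw [Finset.sum_ite_eq' Finset.univ t
              (fun s => ρ θ * ρi i s * ∑ a, π θ a * v i (Function.update a i b))]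
            simp
        _ = ρi i t * ∑ σ, ρ σ * ∑ a, π σ a * v i (Function.update a i b) := by
            rw [Finset.mul_sum]
            exact Finset.sum_congr rfl fun θ _ => by ring
    rw [hL] at h2
    rw [hR] at h2
    exact h2
  -- claim 2: per-player deviation bound
  have claim2 : ∀ i : Fin n,
      (∑ τ, ρ τ * ∑ σ, ρ σ * ∑ a, π σ a * v i (Function.update a i (astar τ i)))
        ≤ ∑ σ, ρ σ * ∑ a, π σ a * v i a := by
    intro i
    rw [lemC i (fun τ => ∑ σ, ρ σ * ∑ a, π σ a * v i (Function.update a i (astar τ i)))]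
    have hb : ∀ (τ' : ∀ j, Θ j) (t : Θ i),
        astar (Function.update τ' i t) i ∈ Act i t := by
      intro τ' t
      have h := hmem (Function.update τ' i t) i
      rwa [Function.update_self] at h
    calc ∑ τ', ∑ t, ρ τ' * ρi i t *
            ∑ σ, ρ σ * ∑ a, π σ a * v i (Function.update a i (astar (Function.update τ' i t) i))
        ≤ ∑ τ', ∑ t, ρ τ' * ∑ θ, (if θ i = t then ρ θ else 0) * ∑ a, π θ a * v i a := by
          refine Finset.sum_le_sum fun τ' _ => Finset.sum_le_sum fun t _ => ?_
          rw [mul_assoc]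
          exact mul_le_mul_of_nonneg_left (star i t _ (hb τ' t)) (hρ0 τ')
      _ = ∑ t : Θ i, ∑ θ, (if θ i = t then ρ θ else 0) * ∑ a, π θ a * v i a := by
          rw [Finset.sum_comm]
          refine Finset.sum_congr rfl fun t _ => ?_
          rw [← Finset.sum_mul, hρ1, one_mul]
      _ = ∑ θ, ∑ t : Θ i, (if θ i = t then ρ θ else 0) * ∑ a, π θ a * v i a :=
          Finset.sum_comm
      _ = ∑ σ, ρ σ * ∑ a, π σ a * v i a := by
          refine Finset.sum_congr rfl fun θ _ => ?_
          simp only [ite_mul, zero_mul]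
          rw [Finset.sum_ite_eq Finset.univ (θ i)
            (fun _ => ρ θ * ∑ a, π θ a * v i a)]
          simp
  -- smoothness pointwise
  have hPc : ∀ (a b : Fin n → E) (i : Fin n), (∀ m, ∃ t, a m ∈ Act m t) →
      (∀ m, ∃ t, b m ∈ Act m t) → (∀ m, ∃ t, Function.update a i (b i) m ∈ Act m t) := by
    intro a b i ha hb m
    rcases eq_or_ne m i with rfl | hne
    · rw [Function.update_self]; exact hb m
    · rw [Function.update_of_ne hne]; exact ha m
  have hsm : ∀ (τ : ∀ i, Θ i) (a : Fin n → E), (∀ m, ∃ t, a m ∈ Act m t) →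
      f (Finset.univ.image (astar τ)) - f (Finset.univ.image a)
        ≤ ∑ i, v i (Function.update a i (astar τ i)) := fun τ a ha =>
    smooth_aux f hmono hsub v hv0 _ hPc hmarg a (astar τ) ha (fun m => ⟨τ m, hmem τ m⟩)
  -- the main chain of inequalities
  have hT : (∑ τ, ρ τ * ∑ σ, ρ σ * ∑ a : Fin n → E, π σ a *
        (f (Finset.univ.image (astar τ)) - f (Finset.univ.image a)))
      ≤ ∑ τ, ρ τ * ∑ σ, ρ σ * ∑ a : Fin n → E, π σ a *
        ∑ i, v i (Function.update a i (astar τ i)) := by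
    refine Finset.sum_le_sum fun τ _ => mul_le_mul_of_nonneg_left
      (Finset.sum_le_sum fun σ _ => mul_le_mul_of_nonneg_left
        (Finset.sum_le_sum fun a _ => ?_) (hρ0 σ)) (hρ0 τ)
    rcases eq_or_ne (π σ a) 0 with h | h
    · simp [h]
    · exact mul_le_mul_of_nonneg_left (hsm τ a (fun m => ⟨σ m, hπsupp σ a h m⟩)) (hπ0 σ a)
  have eqT1 : (∑ τ, ρ τ * ∑ σ, ρ σ * ∑ a : Fin n → E, π σ a *
        (f (Finset.univ.image (astar τ)) - f (Finset.univ.image a)))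
      = (∑ τ, ρ τ * f (Finset.univ.image (astar τ)))
        - ∑ θ, ρ θ * ∑ a, π θ a * f (Finset.univ.image a) := by
    have inner : ∀ c : ℝ, ∀ σ : ∀ i, Θ i,
        ∑ a : Fin n → E, π σ a * (c - f (Finset.univ.image a))
          = c - ∑ a : Fin n → E, π σ a * f (Finset.univ.image a) := by
      intro c σ
      simp only [mul_sub]
      rw [Finset.sum_sub_distrib, ← Finset.sum_mul, hπ1, one_mul]
    have mid : ∀ c : ℝ,
        ∑ σ, ρ σ * ∑ a : Fin n → E, π σ a * (c - f (Finset.univ.image a))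
          = c - ∑ θ, ρ θ * ∑ a, π θ a * f (Finset.univ.image a) := by
      intro c
      calc ∑ σ, ρ σ * ∑ a : Fin n → E, π σ a * (c - f (Finset.univ.image a))
          = ∑ σ, ρ σ * (c - ∑ a : Fin n → E, π σ a * f (Finset.univ.image a)) :=
            Finset.sum_congr rfl fun σ _ => by rw [inner c σ]
        _ = c - ∑ θ, ρ θ * ∑ a, π θ a * f (Finset.univ.image a) := by
            simp only [mul_sub]
            rw [Finset.sum_sub_distrib, ← Finset.sum_mul, hρ1, one_mul]
    calc (∑ τ, ρ τ * ∑ σ, ρ σ * ∑ a : Fin n → E, π σ a *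
          (f (Finset.univ.image (astar τ)) - f (Finset.univ.image a)))
        = ∑ τ, ρ τ * (f (Finset.univ.image (astar τ))
            - ∑ θ, ρ θ * ∑ a, π θ a * f (Finset.univ.image a)) :=
          Finset.sum_congr rfl fun τ _ => by rw [mid (f (Finset.univ.image (astar τ)))]
      _ = (∑ τ, ρ τ * f (Finset.univ.image (astar τ)))
            - ∑ θ, ρ θ * ∑ a, π θ a * f (Finset.univ.image a) := by
          simp only [mul_sub]
          rw [Finset.sum_sub_distrib, ← Finset.sum_mul, hρ1, one_mul]
  have eqT2 : (∑ τ, ρ τ * ∑ σ, ρ σ * ∑ a : Fin n → E, π σ a *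
        ∑ i, v i (Function.update a i (astar τ i)))
      = ∑ i, ∑ τ, ρ τ * ∑ σ, ρ σ * ∑ a : Fin n → E,
          π σ a * v i (Function.update a i (astar τ i)) := by
    simp only [Finset.mul_sum]
    exact sum_swap4 (fun τ σ a i => ρ τ * (ρ σ * (π σ a * v i (Function.update a i (astar τ i)))))
  have hsum2 : ∑ i, ∑ τ, ρ τ * ∑ σ, ρ σ * ∑ a : Fin n → E,
        π σ a * v i (Function.update a i (astar τ i))
      ≤ ∑ i, ∑ σ, ρ σ * ∑ a : Fin n → E, π σ a * v i a :=
    Finset.sum_le_sum fun i _ => claim2 i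
  have h3 : ∑ i, ∑ σ, ρ σ * ∑ a : Fin n → E, π σ a * v i a
      ≤ ∑ θ, ρ θ * ∑ a, π θ a * f (Finset.univ.image a) := by
    have e : ∑ i, ∑ σ, ρ σ * ∑ a : Fin n → E, π σ a * v i a
        = ∑ σ, ρ σ * ∑ a : Fin n → E, π σ a * ∑ i, v i a := by
      simp only [Finset.mul_sum]
      exact sum_swap3 (fun i σ a => ρ σ * (π σ a * v i a))
    rw [e]
    refine Finset.sum_le_sum fun σ _ => mul_le_mul_of_nonneg_left
      (Finset.sum_le_sum fun a _ => ?_) (hρ0 σ)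
    rcases eq_or_ne (π σ a) 0 with h | h
    · simp [h]
    · exact mul_le_mul_of_nonneg_left (htotal a (fun m => ⟨σ m, hπsupp σ a h m⟩)) (hπ0 σ a)
  rw [hOPTeq]
  rw [eqT1] at hT
  rw [eqT2] at hT
  linarith
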